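/- Let D be a digraph on vertex set V = {1,…,n}. There exist an integer q ≥ 2, a complete schedule σ and f ∈ F[D,q] such that f^σ is a permutation of [q]^n if and only if every vertex of D belongs to a cycle of D. -/

import Mathlib

open Function

/-- A `p`-walk in the digraph `D` on vertex set `Fin n`. -/
def IsPWalk {n : ℕ} (D : Fin n → Fin n → Prop) (p : ℕ) (w : Fin (p + 1) → Fin n) : Prop :=
  ∀ s : Fin p, D (w s.castSucc) (w s.succ)

/-- `alphaWalks D p` is the maximum number of pairwise independent `p`-walks in `D`. -/
noncomputable def alphaWalks {n : ℕ} (D : Fin n → Fin n → Prop) (p : ℕ) : ℕ :=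
  sSup {k : ℕ | ∃ W : Fin k → Fin (p + 1) → Fin n,
    (∀ i, IsPWalk D p (W i)) ∧ ∀ i j : Fin k, i ≠ j → ∀ s, W i s ≠ W j s}

/-- The interaction graph of an FDS: `(u,v)` is an arc iff `f_v` depends essentially on `x_u`. -/
def IG {n q : ℕ} (f : (Fin n → Fin q) → Fin n → Fin q) (u v : Fin n) : Prop :=
  ∃ x y : Fin n → Fin q, (∀ w : Fin n, w ≠ u → x w = y w) ∧ f x v ≠ f y v

/-- Membership in `F[D,q]`: the interaction graph of `f` equals `D`. -/
def ExactIG {n q : ℕ} (D : Fin n → Fin n → Prop) (f : (Fin n → Fin q) → Fin n → Fin q) : Prop :=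
  ∀ u v, IG f u v ↔ D u v

/-- Membership in `F(D,q)`: the interaction graph of `f` is contained in `D`. -/
def SubIG {n q : ℕ} (D : Fin n → Fin n → Prop) (f : (Fin n → Fin q) → Fin n → Fin q) : Prop :=
  ∀ u v, IG f u v → D u v

/-- A cycle of `D`, given by its list of (distinct) vertices, with arcs between consecutive
vertices, cyclically. A loop is a cycle with one vertex. -/
def IsCycleList {n : ℕ} (D : Fin n → Fin n → Prop) (c : List (Fin n)) : Prop :=
  c ≠ [] ∧ c.Nodup ∧
    ∀ i : Fin c.length, D (c.get i) (c.get ⟨((i : ℕ) + 1) % c.length, Nat.mod_lt _ i.pos⟩)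

/-- A path of `D`, given by its list of (distinct) vertices. -/
def IsPathList {n : ℕ} (D : Fin n → Fin n → Prop) (P : List (Fin n)) : Prop :=
  P.Nodup ∧ P.Chain' D

/-- `f^{(S)}`: update the coordinates in `S` only. -/
def applyBlock {n q : ℕ} (f : (Fin n → Fin q) → Fin n → Fin q) (S : Finset (Fin n))
    (x : Fin n → Fin q) : Fin n → Fin q :=
  fun v => if v ∈ S then f x v else x v

/-- `f^σ = f^{(σ_t)} ∘ ⋯ ∘ f^{(σ_1)}`. -/
def applySchedule {n q : ℕ} (f : (Fin n → Fin q) → Fin n → Fin q)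
    (σ : List (Finset (Fin n))) : (Fin n → Fin q) → Fin n → Fin q :=
  σ.foldl (fun g S => applyBlock f S ∘ g) id

/-- A block-sequential schedule: every vertex is updated exactly once. -/
def BlockSequential {n : ℕ} (σ : List (Finset (Fin n))) : Prop :=
  σ.Pairwise Disjoint ∧ ∀ v : Fin n, ∃ S ∈ σ, v ∈ S

/-- A complete schedule: every vertex is updated at least once. -/
def CompleteSchedule {n : ℕ} (σ : List (Finset (Fin n))) : Prop :=
  ∀ v : Fin n, ∃ S ∈ σ, v ∈ S

/-- `T(D)`: the number of trivial strong components of `D`, i.e. the number of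
vertices not lying on any cycle of `D`. -/
noncomputable def numTrivial {n : ℕ} (D : Fin n → Fin n → Prop) : ℕ :=
  Set.ncard {v : Fin n | ¬ ∃ c : List (Fin n), IsCycleList D c ∧ v ∈ c}

/-- All vertices of `D` can be covered by pairwise vertex-disjoint cycles. -/
def CoveredByDisjointCycles {n : ℕ} (D : Fin n → Fin n → Prop) : Prop :=
  ∃ Cs : List (List (Fin n)), (∀ c ∈ Cs, IsCycleList D c) ∧
    Cs.Pairwise (fun a b => ∀ v ∈ a, v ∉ b) ∧ ∀ v : Fin n, ∃ c ∈ Cs, v ∈ c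

/-! If `f^σ` is a permutation then so is every block update `f^{(S)}`. For `v ∈ S` off every
cycle, let `A` be the vertices of `S` from which `v` is reachable. An in-neighbour of `A` lying
in `S` is again in `A`, and it is not `v`, so the values of `f^{(S)}` on `A ∪ Sᶜ` are a function
of `x` on `(A \ {v}) ∪ Sᶜ`, a smaller set of coordinates; counting shows that `f^{(S)}` is not
injective.

Conversely, fix for every vertex a cycle through it and update the cycles one after the other,
with a linear `f_v(x) = ∑ c_{uv} x_u` over `ZMod p`. Over generic coefficients the determinant of
each block update is a nonzero polynomial, as the cycle's permutation matrix is a specialisation;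
so is the product `P` of these determinants and of the variables of the arcs. Pick an integer
point where `P` does not vanish and a prime `p` larger than the value. -/

section Schedule

variable {n q : ℕ} {f : (Fin n → Fin q) → Fin n → Fin q}

theorem applySchedule_cons (S : Finset (Fin n)) (σ : List (Finset (Fin n))) :
    applySchedule f (S :: σ) = applySchedule f σ ∘ applyBlock f S := by
  suffices h : ∀ g, σ.foldl (fun g S => applyBlock f S ∘ g) g = applySchedule f σ ∘ g from h _
  induction σ with
  | nil => exact fun _ => rfl
  | cons T σ ih =>
    intro g
    simp only [applySchedule, List.foldl_cons]
    rw [ih, ih (applyBlock f T ∘ id)]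
    rfl

theorem bijective_applySchedule {σ : List (Finset (Fin n))}
    (h : ∀ S ∈ σ, Bijective (applyBlock f S)) : Bijective (applySchedule f σ) := by
  induction σ with
  | nil => exact bijective_id
  | cons S σ ih =>
    rw [applySchedule_cons]
    exact (ih fun T hT => h T (List.mem_cons_of_mem _ hT)).comp (h S List.mem_cons_self)

theorem injective_applyBlock_of_bijective_applySchedule {σ : List (Finset (Fin n))}
    (h : Bijective (applySchedule f σ)) {S : Finset (Fin n)} (hS : S ∈ σ) :
    Injective (applyBlock f S) := by
  induction σ with
  | nil => cases hS
  | cons T σ ih =>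
    rw [applySchedule_cons] at h
    rcases List.mem_cons.1 hS with rfl | hS
    · exact h.1.of_comp
    · exact ih (Finite.surjective_iff_bijective.1 h.2.of_comp) hS

end Schedule

theorem dependsOn_of_update_eq {ι α β : Type*} [Finite ι] [DecidableEq ι] {g : (ι → α) → β}
    {s : Set ι} (h : ∀ x i a, i ∉ s → g (update x i a) = g x) : DependsOn g s := by
  classical
  have : Fintype ι := Fintype.ofFinite ι
  intro x y hxy
  suffices key : ∀ T : Finset ι, (∀ i ∈ T, i ∉ s) →
      ∀ x : ι → α, (∀ i ∉ T, x i = y i) → g x = g y from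
    key (Finset.univ.filter (· ∉ s)) (by simp) x (fun i hi => hxy i (by simpa using hi))
  intro T
  induction T using Finset.induction_on with
  | empty => exact fun _ x hx => congrArg g (funext fun i => hx i (Finset.notMem_empty i))
  | insert a T _ ih =>
    intro hT x hx
    rw [← h x a (y a) (hT a (Finset.mem_insert_self a T))]
    refine ih (fun i hi => hT i (Finset.mem_insert_of_mem hi)) _ fun i hi => ?_
    by_cases hia : i = a
    · subst hia
      exact update_self ..
    · rw [update_of_ne hia]
      exact hx i (by simp [hia, hi])

theorem dependsOn_IG {n q : ℕ} (f : (Fin n → Fin q) → Fin n → Fin q) (v : Fin n) :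
    DependsOn (f · v) {u | IG f u v} := by
  refine dependsOn_of_update_eq fun x u a hu => ?_
  by_contra hne
  exact hu ⟨update x u a, x, fun w hw => update_of_ne hw a x, hne⟩

theorem not_injective_of_dependsOn {ι α : Type*} [Fintype ι] [DecidableEq ι] [Fintype α]
    [Nontrivial α] {g : (ι → α) → ι → α} {A B : Finset ι} (hBA : B.card < A.card)
    (hg : ∀ i ∈ A, DependsOn (g · i) B) : ¬ Injective g := by
  intro hinj
  let Ψ : (ι → α) → (B → α) × ((Aᶜ : Finset ι) → α) := fun x => (fun i => x i, fun i => g x i)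
  have hΨ : Injective Ψ := by
    intro x y hxy
    simp only [Ψ, Prod.mk.injEq, funext_iff, Subtype.forall] at hxy
    refine hinj (funext fun i => ?_)
    by_cases hi : i ∈ A
    · exact hg i hi hxy.1
    · exact hxy.2 i (Finset.mem_compl.2 hi)
  have hcard := Fintype.card_le_of_injective Ψ hΨ
  simp only [Fintype.card_prod, Fintype.card_fun, Fintype.card_coe, Finset.card_compl,
    ← pow_add] at hcard
  have hA : A.card ≤ Fintype.card ι := Finset.card_le_univ A
  have : Fintype.card α ^ (B.card + (Fintype.card ι - A.card)) < Fintype.card α ^ Fintype.card ι :=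
    Nat.pow_lt_pow_right Fintype.one_lt_card (by omega)
  omega

theorem List.exists_nodup_isChain_of_reflTransGen {α : Type*} {r : α → α → Prop} {a b : α}
    (h : Relation.ReflTransGen r a b) :
    ∃ l : List α, l.head? = some a ∧ l.getLast? = some b ∧ l.IsChain r ∧ l.Nodup := by
  induction h using Relation.ReflTransGen.head_induction_on with
  | refl => exact ⟨[b], rfl, rfl, List.isChain_singleton b, List.nodup_singleton b⟩
  | @head a c hac _ ih =>
    obtain ⟨l, hhead, hlast, hchain, hnodup⟩ := ih
    by_cases hal : a ∈ l
    · obtain ⟨l₁, l₂, rfl⟩ := List.append_of_mem hal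
      refine ⟨a :: l₂, rfl, ?_, hchain.suffix ⟨l₁, rfl⟩,
        hnodup.sublist (List.sublist_append_right l₁ _)⟩
      rwa [List.getLast?_append_of_ne_nil _ (List.cons_ne_nil _ _)] at hlast
    · obtain ⟨t, rfl⟩ : ∃ t, l = c :: t := by
        cases l <;> simp_all
      refine ⟨a :: c :: t, rfl, by simpa using hlast, hchain.cons_cons hac, hnodup.cons hal⟩

section Cycles

variable {n : ℕ} {D : Fin n → Fin n → Prop}

theorem isCycleList_of_isChain {c : List (Fin n)} (hne : c ≠ []) (hnd : c.Nodup)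
    (hch : c.IsChain D) (hwrap : D (c.getLast hne) (c.head hne)) : IsCycleList D c := by
  refine ⟨hne, hnd, fun ⟨i, hi⟩ => ?_⟩
  simp only [List.get_eq_getElem]
  by_cases hi' : i + 1 < c.length
  · simpa [Nat.mod_eq_of_lt hi'] using List.isChain_iff_getElem.1 hch i hi'
  · have hlast : i = c.length - 1 := by omega
    simp only [hlast, Nat.sub_add_cancel (List.length_pos_iff.2 hne), Nat.mod_self]
    simpa [List.getLast_eq_getElem, List.head_eq_getElem] using hwrap

theorem exists_isCycleList_of_transGen {v : Fin n} (h : Relation.TransGen D v v) :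
    ∃ c : List (Fin n), IsCycleList D c ∧ v ∈ c := by
  obtain ⟨w, hvw, hwv⟩ := Relation.TransGen.head'_iff.1 h
  obtain ⟨l, hhead, hlast, hchain, hnodup⟩ := List.exists_nodup_isChain_of_reflTransGen hwv
  have hne : l ≠ [] := by rintro rfl; cases hhead
  rw [List.head?_eq_some_head hne, Option.some_inj] at hhead
  rw [List.getLast?_eq_some_getLast hne, Option.some_inj] at hlast
  refine ⟨l, isCycleList_of_isChain hne hnodup hchain (by rwa [hhead, hlast]), ?_⟩
  exact hlast ▸ List.getLast_mem hne

theorem exists_isCycleList_of_injective_applyBlock {q : ℕ} (hq : 2 ≤ q)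
    {f : (Fin n → Fin q) → Fin n → Fin q} (hf : SubIG D f) {S : Finset (Fin n)}
    (hinj : Injective (applyBlock f S)) {v : Fin n} (hvS : v ∈ S) :
    ∃ c : List (Fin n), IsCycleList D c ∧ v ∈ c := by
  classical
  have : Nontrivial (Fin q) := Fin.nontrivial_iff_two_le.2 hq
  by_contra hno
  set A := S.filter (Relation.ReflTransGen D · v)
  have hvA : v ∈ A := Finset.mem_filter.2 ⟨hvS, .refl⟩
  have hpred : ∀ u ∈ S, ∀ w ∈ A, IG f u w → u ∈ A.erase v := by
    intro u hu w hw huw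
    have hwv := (Finset.mem_filter.1 hw).2
    refine Finset.mem_erase.2 ⟨?_, Finset.mem_filter.2 ⟨hu, .head (hf u w huw) hwv⟩⟩
    rintro rfl
    exact hno (exists_isCycleList_of_transGen (.head' (hf u w huw) hwv))
  refine not_injective_of_dependsOn (A := Sᶜ ∪ A) (B := Sᶜ ∪ A.erase v) ?_ (fun i hi => ?_) hinj
  · refine Finset.card_lt_card (Finset.ssubset_iff_of_subset ?_ |>.2 ⟨v, ?_, ?_⟩)
    · exact Finset.union_subset_union (le_refl _) (Finset.erase_subset v A)
    · exact Finset.mem_union_right _ hvA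
    · simp [hvS]
  by_cases hiS : i ∈ S
  · have hiA : i ∈ A := (Finset.mem_union.1 hi).resolve_left (Finset.notMem_compl.2 hiS)
    simp only [applyBlock, hiS, if_true]
    refine (dependsOn_IG f i).mono fun u hu => ?_
    by_cases huS : u ∈ S
    · exact Finset.mem_union_right _ (hpred u huS i hiA hu)
    · exact Finset.mem_union_left _ (Finset.mem_compl.2 huS)
  · intro x y hxy
    simpa [applyBlock, hiS] using hxy i (Finset.mem_union_left _ (Finset.mem_compl.2 hiS))

end Cycles

section Linear

variable {n q : ℕ} {R : Type*} [Semiring R]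

/-- The matrix of `f^{(S)}` when `f_v(x) = ∑ u, co u v * x u`. -/
def blockMatrix (co : Fin n → Fin n → R) (S : Finset (Fin n)) : Matrix (Fin n) (Fin n) R :=
  Matrix.of fun v u => if v ∈ S then co u v else (1 : Matrix (Fin n) (Fin n) R) v u

theorem blockMatrix_map {R' : Type*} [Semiring R'] (φ : R →+* R') (co : Fin n → Fin n → R)
    (S : Finset (Fin n)) :
    (blockMatrix co S).map φ = blockMatrix (fun u v => φ (co u v)) S := by
  ext v u
  simp only [blockMatrix, Matrix.map_apply, Matrix.of_apply, Matrix.one_apply]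
  split_ifs <;> simp

def linearFDS (e : Fin q ≃ R) (co : Fin n → Fin n → R) : (Fin n → Fin q) → Fin n → Fin q :=
  fun x v => e.symm (∑ u, co u v * e (x u))

theorem IG_linearFDS_iff (e : Fin q ≃ R) (co : Fin n → Fin n → R) (u v : Fin n) :
    IG (linearFDS e co) u v ↔ co u v ≠ 0 := by
  constructor
  · rintro ⟨x, y, hxy, hne⟩ h0
    refine hne (congrArg e.symm (Finset.sum_congr rfl fun w _ => ?_))
    by_cases hw : w = u
    · simp [hw, h0]
    · rw [hxy w hw]
  · intro h
    refine ⟨update (fun _ => e.symm 0) u (e.symm 1), fun _ => e.symm 0,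
      fun w hw => update_of_ne hw _ _, fun heq => h ?_⟩
    simpa [linearFDS, Fintype.sum_eq_single u, update_apply, apply_ite] using congrArg e heq

theorem applyBlock_linearFDS (e : Fin q ≃ R) (co : Fin n → Fin n → R) (S : Finset (Fin n)) :
    applyBlock (linearFDS e co) S =
      (e.symm ∘ ·) ∘ (blockMatrix co S).mulVec ∘ (e ∘ ·) := by
  funext x v
  by_cases hv : v ∈ S
  · simp [applyBlock, linearFDS, blockMatrix, Matrix.mulVec, dotProduct, hv]
  · simp [applyBlock, blockMatrix, Matrix.mulVec, dotProduct, hv, Matrix.one_apply]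

end Linear

theorem bijective_applyBlock_linearFDS {n q : ℕ} {R : Type*} [CommRing R] (e : Fin q ≃ R)
    {co : Fin n → Fin n → R} {S : Finset (Fin n)} (h : IsUnit (blockMatrix co S).det) :
    Bijective (applyBlock (linearFDS e co) S) := by
  set M := blockMatrix co S
  have hM : Bijective M.mulVec := by
    refine bijective_iff_has_inverse.2 ⟨M⁻¹.mulVec, fun x => ?_, fun x => ?_⟩
    · rw [Matrix.mulVec_mulVec, Matrix.nonsing_inv_mul M h, Matrix.one_mulVec]
    · rw [Matrix.mulVec_mulVec, Matrix.mul_nonsing_inv M h, Matrix.one_mulVec]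
  rw [applyBlock_linearFDS]
  exact ((Equiv.refl (Fin n)).arrowCongr e.symm).bijective.comp
    (hM.comp ((Equiv.refl (Fin n)).arrowCongr e).bijective)

section Generic

variable {n : ℕ} {D : Fin n → Fin n → Prop}

theorem IsCycleList.rel_formPerm {c : List (Fin n)} (hc : IsCycleList D c) {u : Fin n}
    (hu : u ∈ c) : D u (c.formPerm u) := by
  obtain ⟨i, hi, rfl⟩ := List.getElem_of_mem hu
  rw [List.formPerm_apply_getElem _ hc.2.1]
  exact hc.2.2 ⟨i, hi⟩

open Classical in
noncomputable def genericCoeff (D : Fin n → Fin n → Prop) (u v : Fin n) :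
    MvPolynomial (Fin n × Fin n) ℤ :=
  if D u v then MvPolynomial.X (u, v) else 0

theorem det_blockMatrix_genericCoeff_ne_zero {c : List (Fin n)} (hc : IsCycleList D c) :
    (blockMatrix (genericCoeff D) c.toFinset).det ≠ 0 := by
  classical
  set τ := c.formPerm
  have hperm : (blockMatrix (genericCoeff D) c.toFinset).map
      (MvPolynomial.eval fun a => if τ a.1 = a.2 then 1 else 0) = τ⁻¹.permMatrix ℤ := by
    rw [blockMatrix_map]
    ext v u
    by_cases hv : v ∈ c
    · have hτ : τ u = v → D u v := fun h =>
        h ▸ hc.rel_formPerm (List.formPerm_mem_iff_mem.1 (h ▸ hv))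
      by_cases huv : τ u = v
      · simp [blockMatrix, genericCoeff, hv, huv, hτ huv, Equiv.Perm.permMatrix,
          Equiv.symm_apply_eq]
      · simp [blockMatrix, genericCoeff, hv, huv, Ne.symm huv, Equiv.Perm.permMatrix,
          Equiv.symm_apply_eq, apply_ite]
    · have hfix : τ.symm v = v := τ.symm_apply_eq.2 (List.formPerm_apply_of_notMem hv).symm
      simp [blockMatrix, hv, hfix, Equiv.Perm.permMatrix, Matrix.one_apply]
  intro h0
  have := (MvPolynomial.eval fun a => if τ a.1 = a.2 then (1 : ℤ) else 0).map_det
    (blockMatrix (genericCoeff D) c.toFinset)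
  rw [h0, map_zero, RingHom.mapMatrix_apply, hperm, Matrix.det_permutation] at this
  exact (Units.ne_zero _) this.symm

end Generic

theorem exists_prime_coeffs {n : ℕ} {D : Fin n → Fin n → Prop} {ι : Type*} [Fintype ι]
    {c : ι → List (Fin n)} (hc : ∀ i, IsCycleList D (c i)) :
    ∃ p, p.Prime ∧ ∃ co : Fin n → Fin n → ZMod p,
      (∀ u v, co u v ≠ 0 ↔ D u v) ∧ ∀ i, (blockMatrix co (c i).toFinset).det ≠ 0 := by
  classical
  set P := (∏ i, (blockMatrix (genericCoeff D) (c i).toFinset).det) *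
    ∏ a ∈ Finset.univ.filter (fun a : Fin n × Fin n => D a.1 a.2), MvPolynomial.X a
  have hP : P ≠ 0 :=
    mul_ne_zero (Finset.prod_ne_zero_iff.2 fun i _ => det_blockMatrix_genericCoeff_ne_zero (hc i))
      (Finset.prod_ne_zero_iff.2 fun a _ => MvPolynomial.X_ne_zero a)
  obtain ⟨z, hz⟩ : ∃ z, MvPolynomial.eval z P ≠ 0 := by
    by_contra! h
    exact hP (MvPolynomial.funext fun z => by simp [h z])
  obtain ⟨p, hpz, hp⟩ := Nat.exists_infinite_primes ((MvPolynomial.eval z P).natAbs + 1)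
  have := Fact.mk hp
  set ψ := (Int.castRingHom (ZMod p)).comp (MvPolynomial.eval z)
  have hψ : ψ P ≠ 0 := by
    intro h
    rw [RingHom.comp_apply, eq_intCast, ZMod.intCast_zmod_eq_zero_iff_dvd, Int.natCast_dvd] at h
    have := Nat.le_of_dvd (Int.natAbs_pos.2 hz) h
    omega
  rw [map_mul, map_prod, map_prod] at hψ
  obtain ⟨hdet, hX⟩ := mul_ne_zero_iff.1 hψ
  refine ⟨p, hp, fun u v => ψ (genericCoeff D u v), fun u v => ?_, fun i => ?_⟩
  · by_cases h : D u v
    · simpa [genericCoeff, h] using Finset.prod_ne_zero_iff.1 hX (u, v) (by simp [h])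
    · simp [genericCoeff, h]
  · rw [← blockMatrix_map, ← RingHom.mapMatrix_apply, ← RingHom.map_det]
    exact Finset.prod_ne_zero_iff.1 hdet i (Finset.mem_univ i)

theorem exists_bijective_applySchedule {n : ℕ} {D : Fin n → Fin n → Prop}
    (h : ∀ v : Fin n, ∃ c : List (Fin n), IsCycleList D c ∧ v ∈ c) :
    ∃ (q : ℕ), 2 ≤ q ∧
      ∃ (f : (Fin n → Fin q) → Fin n → Fin q) (σ : List (Finset (Fin n))),
        ExactIG D f ∧ CompleteSchedule σ ∧ Bijective (applySchedule f σ) := by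
  choose c hc hvc using h
  obtain ⟨p, hp, co, hco, hdet⟩ := exists_prime_coeffs hc
  have := Fact.mk hp
  refine ⟨p, hp.two_le, linearFDS (ZMod.finEquiv p).toEquiv co,
    List.ofFn fun v => (c v).toFinset, fun u v => (IG_linearFDS_iff _ co u v).trans (hco u v),
    fun v => ⟨_, List.mem_ofFn.2 ⟨v, rfl⟩, List.mem_toFinset.2 (hvc v)⟩,
    bijective_applySchedule fun S hS => ?_⟩
  obtain ⟨v, rfl⟩ := List.mem_ofFn.1 hS
  exact bijective_applyBlock_linearFDS _ (hdet v).isUnit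

theorem permutation_complete_schedule_general {n : ℕ} (D : Fin n → Fin n → Prop) :
    (∃ (q : ℕ), 2 ≤ q ∧
        ∃ (f : (Fin n → Fin q) → Fin n → Fin q) (σ : List (Finset (Fin n))),
          ExactIG D f ∧ CompleteSchedule σ ∧ Function.Bijective (applySchedule f σ)) ↔
      ∀ v : Fin n, ∃ c : List (Fin n), IsCycleList D c ∧ v ∈ c := by
  refine ⟨?_, exists_bijective_applySchedule⟩
  rintro ⟨q, hq, f, σ, hf, hσ, hbij⟩ v
  obtain ⟨S, hS, hvS⟩ := hσ v
  exact exists_isCycleList_of_injective_applyBlock hq (fun u v => (hf u v).1)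
    (injective_applyBlock_of_bijective_applySchedule hbij hS) hvS

/-- there exist `q ≥ 2`, a complete schedule `σ` and `f ∈ F[D,q]` such that
`f^σ` is a permutation of `[q]^n` iff every vertex of `D` belongs to a cycle of `D`. -/
theorem permutation_complete_schedule {n : ℕ} (hn : 1 ≤ n) (D : Fin n → Fin n → Prop) :
    (∃ (q : ℕ), 2 ≤ q ∧
        ∃ (f : (Fin n → Fin q) → Fin n → Fin q) (σ : List (Finset (Fin n))),
          ExactIG D f ∧ CompleteSchedule σ ∧ Function.Bijective (applySchedule f σ)) ↔
      ∀ v : Fin n, ∃ c : List (Fin n), IsCycleList D c ∧ v ∈ c :=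
  permutation_complete_schedule_general D
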